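/- arXiv:2501.15941 — 2 statements merged into one kernel-verified Lean document; each statement's English description precedes it below -/
import Mathlib

section
/- Let L(w) = (1/n)Σᵢ ℓᵢ(w) with each ℓᵢ twice differentiable and convex with positive definite Hessians, and let ρ ≥ 0. Then for any w ∈ ℝ^p, the ρ-Hessian dissimilarity satisfies τ^ρ(∇²L(w)) ≤ min{n, (M(w)+ρ)/(μ(w)+ρ)}, where M(w) = maxᵢ λ_max(∇²ℓᵢ(w)) and μ(w) = λ_min(∇²L(w)). -/
/-!
Write `R = H + ρ • 1`. Conjugation by `R^{-1/2}` turns a Loewner bound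
`ℓH i + ρ • 1 ≤ c • R` into `S i ≤ c • 1`, i.e. into the eigenvalue bound `c`. For `c = n` the
Loewner bound holds because `n • R = ∑ k, ℓH k + (n * ρ) • 1` and the other summands are
positive semidefinite; for `c = (Mw + ρ) / (μw + ρ)` because `ℓH i + ρ • 1 ≤ (Mw + ρ) • 1`
and `(μw + ρ) • 1 ≤ R`.
-/

open Matrix

namespace Matrix.PosSemidef

/-- The positive semidefinite square root, as `Matrix.PosSemidef.sqrt` was defined in Mathlib
(December 2024); the declaration has since been removed from Mathlib. -/
noncomputable def sqrt {n : Type*} [Fintype n] [DecidableEq n] {A : Matrix n n ℝ}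
    (hA : A.PosSemidef) : Matrix n n ℝ :=
  hA.1.eigenvectorUnitary.1 * diagonal ((↑) ∘ (√·) ∘ hA.1.eigenvalues) *
  (star hA.1.eigenvectorUnitary : Matrix n n ℝ)

end Matrix.PosSemidef

open scoped MatrixOrder

namespace Matrix

variable {m : Type*} [Fintype m] [DecidableEq m]

lemma PosSemidef.sqrt_eq_cfcSqrt {A : Matrix m m ℝ} (hA : A.PosSemidef) :
    hA.sqrt = CFC.sqrt A := by
  rw [CFC.sqrt_eq_real_sqrt A hA.nonneg, cfcₙ_eq_cfc, hA.1.cfc_eq]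
  rfl

lemma IsHermitian.eigenvalues_le_of_le_smul_one {A : Matrix m m ℝ} (hA : A.IsHermitian) {c : ℝ}
    (h : A ≤ c • 1) (j : m) : hA.eigenvalues j ≤ c := by
  rw [← Algebra.algebraMap_eq_smul_one, le_algebraMap_iff_spectrum_le hA.isSelfAdjoint] at h
  exact h _ (hA.eigenvalues_mem_spectrum_real j)

lemma IsHermitian.le_smul_one_of_eigenvalues_le {A : Matrix m m ℝ} (hA : A.IsHermitian) {c : ℝ}
    (h : ∀ j, hA.eigenvalues j ≤ c) : A ≤ c • 1 := by
  rw [← Algebra.algebraMap_eq_smul_one]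
  refine le_algebraMap_of_spectrum_le (fun x hx => ?_) hA.isSelfAdjoint
  obtain ⟨j, rfl⟩ := hA.spectrum_real_eq_range_eigenvalues ▸ hx
  exact h j

lemma IsHermitian.smul_one_le_of_le_eigenvalues {A : Matrix m m ℝ} (hA : A.IsHermitian) {c : ℝ}
    (h : ∀ j, c ≤ hA.eigenvalues j) : c • 1 ≤ A := by
  rw [← Algebra.algebraMap_eq_smul_one]
  refine algebraMap_le_of_le_spectrum (fun x hx => ?_) hA.isSelfAdjoint
  obtain ⟨j, rfl⟩ := hA.spectrum_real_eq_range_eigenvalues ▸ hx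
  exact h j

lemma PosDef.inv_sqrt_mul_mul_inv_sqrt_le_smul_one {R A : Matrix m m ℝ} (hR : R.PosDef) {c : ℝ}
    (h : A ≤ c • R) : (hR.posSemidef.sqrt)⁻¹ * A * (hR.posSemidef.sqrt)⁻¹ ≤ c • 1 := by
  set s := hR.posSemidef.sqrt with hs_def
  have hss : s * s = R := by
    rw [hs_def, PosSemidef.sqrt_eq_cfcSqrt, CFC.sqrt_mul_sqrt_self R hR.posSemidef.nonneg]
  have hs : IsUnit s.det :=
    (isUnit_iff_isUnit_det s).mp (isUnit_of_mul_isUnit_left (hss ▸ hR.isUnit))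
  have hinv : 0 ≤ s⁻¹ := by
    rw [hs_def, PosSemidef.sqrt_eq_cfcSqrt, hR.posSemidef.inv_sqrt]
    exact CFC.sqrt_nonneg _
  calc s⁻¹ * A * s⁻¹ ≤ s⁻¹ * (c • R) * s⁻¹ := conjugate_le_conjugate_of_nonneg h hinv
    _ = c • 1 := by
      rw [← hss, Matrix.mul_smul, Matrix.smul_mul, ← mul_assoc, nonsing_inv_mul _ hs, one_mul,
        mul_nonsing_inv _ hs]

lemma single_add_smul_one_le_card_smul {ι : Type*} [Fintype ι] {A : ι → Matrix m m ℝ}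
    (hA : ∀ k, (A k).PosSemidef) {ρ : ℝ} (hρ : 0 ≤ ρ) (i : ι) :
    A i + ρ • 1 ≤ (Fintype.card ι : ℝ) • ((1 / (Fintype.card ι : ℝ)) • ∑ k, A k + ρ • 1) := by
  have hcard : (1 : ℝ) ≤ Fintype.card ι := by
    exact_mod_cast Fintype.card_pos_iff.mpr ⟨i⟩
  rw [smul_add, smul_smul, mul_one_div_cancel (by positivity), one_smul, smul_smul]
  exact add_le_add (Finset.single_le_sum (fun k _ => (hA k).nonneg) (Finset.mem_univ i))
    (smul_le_smul_of_nonneg_right (le_mul_of_one_le_left hρ hcard) PosSemidef.one.nonneg)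

lemma add_smul_one_le_div_smul {A H : Matrix m m ℝ} {M μ ρ : ℝ} (hA : A ≤ M • 1) (hH : μ • 1 ≤ H)
    (hMρ : 0 ≤ M + ρ) (hμρ : 0 < μ + ρ) : A + ρ • 1 ≤ ((M + ρ) / (μ + ρ)) • (H + ρ • 1) :=
  calc A + ρ • 1 ≤ M • 1 + ρ • 1 := add_le_add_left hA _
    _ = ((M + ρ) / (μ + ρ)) • ((μ + ρ) • 1) := by
      rw [smul_smul, div_mul_cancel₀ _ hμρ.ne', add_smul]
    _ ≤ ((M + ρ) / (μ + ρ)) • (H + ρ • 1) := by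
      refine smul_le_smul_of_nonneg_left ?_ (div_nonneg hMρ hμρ.le)
      rw [add_smul]
      exact add_le_add_left hH _

end Matrix

theorem rho_hessian_dissimilarity_bound_general {n p : ℕ}
    (ℓH : Fin n → Matrix (Fin p) (Fin p) ℝ)
    (hPD : ∀ i, (ℓH i).PosDef) (ρ : ℝ) (hρ : 0 ≤ ρ)
    (H : Matrix (Fin p) (Fin p) ℝ) (hH : H = (1 / (n : ℝ)) • ∑ i, ℓH i)
    (hHpd : H.PosDef)
    (hRpd : (H + ρ • (1 : Matrix (Fin p) (Fin p) ℝ)).PosDef)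
    (S : Fin n → Matrix (Fin p) (Fin p) ℝ)
    (hS : ∀ i, S i = (hRpd.posSemidef.sqrt)⁻¹ * (ℓH i + ρ • (1 : Matrix (Fin p) (Fin p) ℝ))
        * (hRpd.posSemidef.sqrt)⁻¹)
    (hSHerm : ∀ i, (S i).IsHermitian)
    (Mw μw : ℝ)
    (hMw : Mw = ⨆ i, ⨆ j, (hPD i).1.eigenvalues j)
    (hμw : μw = ⨅ j, hHpd.1.eigenvalues j) :
    ∀ i j, (hSHerm i).eigenvalues j ≤ min (n : ℝ) ((Mw + ρ) / (μw + ρ)) := by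
  intro i j
  have hM : ℓH i ≤ Mw • 1 := (hPD i).1.le_smul_one_of_eigenvalues_le fun l =>
    hMw ▸ (le_ciSup (Set.finite_range _).bddAbove l).trans
      (le_ciSup (f := fun k => ⨆ l, (hPD k).1.eigenvalues l) (Set.finite_range _).bddAbove i)
  have hM_nonneg : 0 ≤ Mw := hMw ▸ Real.iSup_nonneg fun k =>
    Real.iSup_nonneg fun l => ((hPD k).eigenvalues_pos l).le
  have hμ : μw • 1 ≤ H := hHpd.1.smul_one_le_of_le_eigenvalues fun l =>
    hμw ▸ ciInf_le (Set.finite_range _).bddBelow l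
  have hμ_pos : 0 < μw := by
    have : Nonempty (Fin p) := ⟨j⟩
    obtain ⟨l, hl⟩ := exists_eq_ciInf_of_finite (f := hHpd.1.eigenvalues)
    exact hμw ▸ hl ▸ hHpd.eigenvalues_pos l
  have eigenvalue_le : ∀ c, ℓH i + ρ • 1 ≤ c • (H + ρ • 1) → (hSHerm i).eigenvalues j ≤ c :=
    fun c hc => (hSHerm i).eigenvalues_le_of_le_smul_one
      (hS i ▸ hRpd.inv_sqrt_mul_mul_inv_sqrt_le_smul_one hc) j
  refine le_min (eigenvalue_le _ ?_) (eigenvalue_le _ ?_)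
  · simpa only [hH, Fintype.card_fin] using
      single_add_smul_one_le_card_smul (fun k => (hPD k).posSemidef) hρ i
  · exact add_smul_one_le_div_smul hM hμ (by linarith) (by linarith)

/-- The ρ-Hessian dissimilarity is bounded by min{n, (M(w)+ρ)/(μ(w)+ρ)},
where M(w) is the largest eigenvalue among the individual Hessians ∇²ℓᵢ(w) and μ(w) is the
smallest eigenvalue of the averaged Hessian ∇²L(w). -/
theorem rho_hessian_dissimilarity_bound {n p : ℕ} [NeZero n] [NeZero p]
    (ℓH : Fin n → Matrix (Fin p) (Fin p) ℝ)
    (hPD : ∀ i, (ℓH i).PosDef) (ρ : ℝ) (hρ : 0 ≤ ρ)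
    (H : Matrix (Fin p) (Fin p) ℝ) (hH : H = (1 / (n : ℝ)) • ∑ i, ℓH i)
    (hHpd : H.PosDef)
    (hRpd : (H + ρ • (1 : Matrix (Fin p) (Fin p) ℝ)).PosDef)
    (S : Fin n → Matrix (Fin p) (Fin p) ℝ)
    (hS : ∀ i, S i = (hRpd.posSemidef.sqrt)⁻¹ * (ℓH i + ρ • (1 : Matrix (Fin p) (Fin p) ℝ))
        * (hRpd.posSemidef.sqrt)⁻¹)
    (hSHerm : ∀ i, (S i).IsHermitian)
    (Mw μw : ℝ)
    (hMw : Mw = ⨆ i, ⨆ j, (hPD i).1.eigenvalues j)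
    (hμw : μw = ⨅ j, hHpd.1.eigenvalues j) :
    ∀ i j, (hSHerm i).eigenvalues j ≤ min (n : ℝ) ((Mw + ρ) / (μw + ρ)) :=
  rho_hessian_dissimilarity_bound_general ℓH hPD ρ hρ H hH hHpd hRpd S hS hSHerm Mw μw hMw hμw
end

section
/- Scaled proximal mapping lower bound: Let L be differentiable with (1-ζ)γ_ℓ-lower and (1+ζ)γ_u-upper quadratic regularity in the P-norm, i.e. for all x, y: L(y) ≥ L(x) + ⟨∇L(x), y-x⟩ + ((1-ζ)γ_ℓ/2)‖y-x‖²_P and L(y) ≤ L(x) + ⟨∇L(x), y-x⟩ + ((1+ζ)γ_u/2)‖y-x‖²_P. Let r be convex, 0 < η ≤ 1/((1+ζ)γ_u), w ∈ dom(r), v ∈ ℝ^p arbitrary, w̃ = argmin_{w'} { ηr(w') + ⟨ηv, w'-w⟩ + (1/2)‖w'-w‖²_P }, g_P = (1/η)P(w - w̃), and Δ = v - ∇L(w). Then for all w' ∈ ℝ^p: R(w') ≥ R(w̃) + ⟨g_P, w'-w⟩ + (η/2)‖g_P‖²_{P⁻¹} + ((1-ζ)γ_ℓ/2)‖w'-w‖²_P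 + ⟨Δ, w̃-w'⟩, where R = L + r. -/
/-!
The optimality condition of the proximal step says that `g_P - v` is a subgradient of `r` at
`w̃`: compare the prox objective at `w̃` and at `w̃ + t (w' - w̃)` and let `t → 0⁺`. Add this
subgradient inequality to the lower quadratic bound for `L` between `w` and `w'` and the upper one
between `w` and `w̃`; the step-size condition turns the curvature term of the latter into
`‖w - w̃‖²_P / (2η) = (η/2) ‖g_P‖²_{P⁻¹}`, and everything else cancels.
-/

open Matrix

open Filter Topology Set in
theorem nonneg_of_eventually_nonneg_add_mul {c b : ℝ}
    (h : ∀ᶠ t in 𝓝[>] 0, 0 ≤ c + t * b) : 0 ≤ c :=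
  have hlim : Tendsto (fun t => c + t * b) (𝓝[>] 0) (𝓝 c) :=
    ((continuous_const.add (continuous_id.mul continuous_const)).tendsto' 0 c
      (by simp)).mono_left nhdsWithin_le_nhds
  ge_of_tendsto hlim h

namespace Matrix

variable {ι : Type*} [Fintype ι] {P : Matrix ι ι ℝ}

theorem IsSymm.dotProduct_mulVec_comm (hP : P.IsSymm) (x y : ι → ℝ) :
    x ⬝ᵥ P *ᵥ y = y ⬝ᵥ P *ᵥ x := by
  rw [dotProduct_mulVec, ← mulVec_transpose, hP.eq, dotProduct_comm]

theorem IsSymm.dotProduct_mulVec_add_smul (hP : P.IsSymm) (a d : ι → ℝ) (t : ℝ) :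
    (a + t • d) ⬝ᵥ P *ᵥ (a + t • d)
      = a ⬝ᵥ P *ᵥ a + 2 * t * (d ⬝ᵥ P *ᵥ a) + t ^ 2 * (d ⬝ᵥ P *ᵥ d) := by
  simp only [mulVec_add, mulVec_smul, dotProduct_add, add_dotProduct, smul_dotProduct,
    dotProduct_smul, smul_eq_mul, hP.dotProduct_mulVec_comm a d]
  ring

theorem mulVec_dotProduct_inv_mulVec [DecidableEq ι] (hP : IsUnit P.det) (x : ι → ℝ) :
    (P *ᵥ x) ⬝ᵥ P⁻¹ *ᵥ (P *ᵥ x) = x ⬝ᵥ P *ᵥ x := by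
  rw [mulVec_mulVec, nonsing_inv_mul _ hP, one_mulVec, dotProduct_comm]

theorem _root_.ConvexOn.mulVec_dotProduct_le_of_isMinOn (hP : P.IsSymm)
    {f : (ι → ℝ) → ℝ} (hf : ConvexOn ℝ Set.univ f) {w x : ι → ℝ}
    (hx : IsMinOn (fun u => f u + 1 / 2 * ((u - w) ⬝ᵥ P *ᵥ (u - w))) Set.univ x) (y : ι → ℝ) :
    (P *ᵥ (w - x)) ⬝ᵥ (y - x) ≤ f y - f x := by
  set d := y - x
  have hlin : (P *ᵥ (w - x)) ⬝ᵥ d = -(d ⬝ᵥ P *ᵥ (x - w)) := by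
    rw [dotProduct_comm, ← neg_sub x w, mulVec_neg, dotProduct_neg]
  suffices 0 ≤ f y - f x + d ⬝ᵥ P *ᵥ (x - w) by linarith
  refine nonneg_of_eventually_nonneg_add_mul (b := (d ⬝ᵥ P *ᵥ d) / 2) ?_
  filter_upwards [Ioc_mem_nhdsGT one_pos] with t ⟨ht0, ht1⟩
  have hconv : f (x + t • d) ≤ f x + t * (f y - f x) := by
    have := hf.2 (Set.mem_univ x) (Set.mem_univ y) (sub_nonneg.2 ht1) ht0.le (sub_add_cancel 1 t)
    rw [show (1 - t) • x + t • y = x + t • d by simp only [d]; module] at this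
    simp only [smul_eq_mul] at this
    linarith
  have hmin := isMinOn_univ_iff.mp hx (x + t • d)
  rw [show x + t • d - w = (x - w) + t • d by abel, hP.dotProduct_mulVec_add_smul] at hmin
  have : 0 ≤ t * (f y - f x + d ⬝ᵥ P *ᵥ (x - w) + t * ((d ⬝ᵥ P *ᵥ d) / 2)) := by
    nlinarith
  linarith [(mul_nonneg_iff_of_pos_left ht0).mp this]

theorem _root_.ConvexOn.prox_subgradient (hP : P.IsSymm) {r : (ι → ℝ) → ℝ}
    (hr : ConvexOn ℝ Set.univ r) {η : ℝ} (hη : 0 < η) {v w x : ι → ℝ}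
    (hx : ∀ u, η * r x + (η • v) ⬝ᵥ (x - w) + 1 / 2 * ((x - w) ⬝ᵥ P *ᵥ (x - w))
        ≤ η * r u + (η • v) ⬝ᵥ (u - w) + 1 / 2 * ((u - w) ⬝ᵥ P *ᵥ (u - w)))
    (y : ι → ℝ) :
    r x + ((1 / η) • P *ᵥ (w - x) - v) ⬝ᵥ (y - x) ≤ r y := by
  have hf : ConvexOn ℝ Set.univ fun u => η * r u + (η • v) ⬝ᵥ (u - w) := by
    have hlin := ((dotProductBilin ℝ ℝ (η • v)).convexOn convex_univ).add_const (-(η • v) ⬝ᵥ w)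
    refine ((hr.smul hη.le).add hlin).congr fun u _ => ?_
    simp [sub_eq_add_neg]
  have key := hf.mulVec_dotProduct_le_of_isMinOn hP (isMinOn_univ_iff.mpr hx) y
  have hv : (η • v) ⬝ᵥ (y - w) - (η • v) ⬝ᵥ (x - w) = η * (v ⬝ᵥ (y - x)) := by
    rw [← dotProduct_sub, sub_sub_sub_cancel_right, smul_dotProduct, smul_eq_mul]
  have : 1 / η * ((P *ᵥ (w - x)) ⬝ᵥ (y - x)) ≤ r y - r x + v ⬝ᵥ (y - x) := by
    rw [div_mul_eq_mul_div, one_mul, div_le_iff₀ hη]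
    linarith
  rw [sub_dotProduct, smul_dotProduct, smul_eq_mul]
  linarith

end Matrix

/-- Scaled proximal mapping lower bound (extension of Lemma 3 of Xiao–Zhang
to the preconditioned setting). -/
theorem scaled_prox_lower_bound {p : ℕ} (P : Matrix (Fin p) (Fin p) ℝ) (hP : P.PosDef)
    (L r : (Fin p → ℝ) → ℝ) (gL : (Fin p → ℝ) → (Fin p → ℝ))
    (ζ γl γu η : ℝ) (hη : 0 < η) (hηu : η ≤ 1 / ((1 + ζ) * γu))
    (hlow : ∀ x y, L y ≥ L x + gL x ⬝ᵥ (y - x)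
        + (1 - ζ) * γl / 2 * ((y - x) ⬝ᵥ P.mulVec (y - x)))
    (hup : ∀ x y, L y ≤ L x + gL x ⬝ᵥ (y - x)
        + (1 + ζ) * γu / 2 * ((y - x) ⬝ᵥ P.mulVec (y - x)))
    (hr : ConvexOn ℝ Set.univ r)
    (w v wt : Fin p → ℝ)
    (hargmin : ∀ w', η * r wt + (η • v) ⬝ᵥ (wt - w) + 1 / 2 * ((wt - w) ⬝ᵥ P.mulVec (wt - w))
        ≤ η * r w' + (η • v) ⬝ᵥ (w' - w) + 1 / 2 * ((w' - w) ⬝ᵥ P.mulVec (w' - w))) :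
    ∀ w' : Fin p → ℝ,
      L w' + r w' ≥ L wt + r wt + ((1 / η) • P.mulVec (w - wt)) ⬝ᵥ (w' - w)
        + η / 2 * (((1 / η) • P.mulVec (w - wt)) ⬝ᵥ P⁻¹.mulVec ((1 / η) • P.mulVec (w - wt)))
        + (1 - ζ) * γl / 2 * ((w' - w) ⬝ᵥ P.mulVec (w' - w))
        + (v - gL w) ⬝ᵥ (wt - w') := by
  intro w'
  have hPs : P.IsSymm := isHermitian_iff_isSymm.mp hP.isHermitian
  have hsub := hr.prox_subgradient hPs hη hargmin w'
  set g := (1 / η) • P *ᵥ (w - wt)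
  set Q := (w - wt) ⬝ᵥ P *ᵥ (w - wt)
  have hQ : 0 ≤ Q := by
    simpa only [star_trivial] using hP.posSemidef.dotProduct_mulVec_nonneg (w - wt)
  have hQ' : (wt - w) ⬝ᵥ P *ᵥ (wt - w) = Q := by
    rw [← neg_sub w wt, mulVec_neg, dotProduct_neg, neg_dotProduct, neg_neg]
  have hgs : g ⬝ᵥ (w - wt) = 1 / η * Q := by
    rw [smul_dotProduct, smul_eq_mul, dotProduct_comm]
  have hgPg : η / 2 * (g ⬝ᵥ P⁻¹ *ᵥ g) = 1 / η * Q / 2 := by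
    rw [mulVec_smul, dotProduct_smul, smul_dotProduct,
      mulVec_dotProduct_inv_mulVec hP.det_pos.ne'.isUnit, smul_eq_mul, smul_eq_mul]
    field_simp
    rfl
  have hstep : (1 + ζ) * γu ≤ 1 / η :=
    (le_one_div hη (one_div_pos.mp (hη.trans_le hηu))).mp hηu
  have hLwt : L wt ≤ L w + gL w ⬝ᵥ (wt - w) + 1 / η * Q / 2 := by
    have := hup w wt
    rw [hQ'] at this
    linarith [mul_le_mul_of_nonneg_right hstep hQ]
  have hL := hlow w w'
  rw [hgPg]
  -- after bilinear expansion the claim is `hsub + hL + hLwt`, using `hgs`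
  simp only [sub_dotProduct, dotProduct_sub] at hsub hL hLwt hgs ⊢
  linarith
end
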